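/- arXiv:2203.12855 — 5 statements merged into one kernel-verified Lean document; each statement's English description precedes it below -/
import Mathlib

section
/- Let e : ℝ → ℝ^p be differentiable, satisfying e'(t) = -M(t) e(t) - d'(t), where vᵀ M(t) v ≥ α ‖v‖² for all v and t, and ‖d'(t)‖ ≤ ω. If V(t) = ½‖e(t)‖², then V'(t) ≤ -(2α - ν) V(t) + ω²/(2ν) for any ν > 0. -/
open scoped RealInnerProductSpace

theorem mul_le_weighted_sq_add_sq {ν : ℝ} (hν : 0 < ν) (a b : ℝ) :
    a * b ≤ ν / 2 * a ^ 2 + b ^ 2 / (2 * ν) := by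
  have key : ν / 2 * a ^ 2 + b ^ 2 / (2 * ν) - a * b = (ν * a - b) ^ 2 / (2 * ν) := by
    field_simp
    ring
  have : 0 ≤ (ν * a - b) ^ 2 / (2 * ν) := by positivity
  linarith

section InnerProduct

variable {E : Type*} [NormedAddCommGroup E] [InnerProductSpace ℝ E]

theorem real_inner_le_weighted_norm_sq_add {ν : ℝ} (hν : 0 < ν) (x y : E) :
    ⟪x, y⟫ ≤ ν / 2 * ‖x‖ ^ 2 + ‖y‖ ^ 2 / (2 * ν) :=
  (real_inner_le_norm x y).trans (mul_le_weighted_sq_add_sq hν _ _)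

-- Young's inequality with weight `ν` trades the perturbation `g` for `ν / 2 * ‖x‖ ^ 2`.
theorem real_inner_neg_sub_le_of_coercive {α ω ν : ℝ} (hν : 0 < ν) {x m g : E}
    (hm : α * ‖x‖ ^ 2 ≤ ⟪x, m⟫) (hg : ‖g‖ ≤ ω) :
    ⟪x, -m - g⟫ ≤ -(2 * α - ν) * (‖x‖ ^ 2 / 2) + ω ^ 2 / (2 * ν) := by
  have hyoung := real_inner_le_weighted_norm_sq_add hν x (-g)
  have hg_sq : ‖g‖ ^ 2 ≤ ω ^ 2 := pow_le_pow_left₀ (norm_nonneg g) hg 2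
  have hdiv : ‖g‖ ^ 2 / (2 * ν) ≤ ω ^ 2 / (2 * ν) := by gcongr
  rw [norm_neg, inner_neg_right] at hyoung
  rw [inner_sub_right, inner_neg_right]
  linarith

theorem HasDerivAt.half_norm_sq {f : ℝ → E} {f' : E} {t : ℝ} (hf : HasDerivAt f f' t) :
    HasDerivAt (fun s => ‖f s‖ ^ 2 / 2) ⟪f t, f'⟫ t := by
  simpa using hf.norm_sq.div_const 2

end InnerProduct

theorem dob_lyapunov_inequality_general (p : ℕ) (e : ℝ → EuclideanSpace ℝ (Fin p))
    (M : ℝ → EuclideanSpace ℝ (Fin p) →ₗ[ℝ] EuclideanSpace ℝ (Fin p))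
    (d' : ℝ → EuclideanSpace ℝ (Fin p)) (α ω ν : ℝ)
    (hν : 0 < ν)
    (hM : ∀ t, ∀ v : EuclideanSpace ℝ (Fin p), α * ‖v‖ ^ 2 ≤ ⟪v, M t v⟫)
    (hdbnd : ∀ t, ‖d' t‖ ≤ ω)
    (he : ∀ t, HasDerivAt e (-(M t (e t)) - d' t) t) :
    ∀ t, deriv (fun s => ‖e s‖ ^ 2 / 2) t ≤
      -(2 * α - ν) * (‖e t‖ ^ 2 / 2) + ω ^ 2 / (2 * ν) := by
  intro t
  rw [(he t).half_norm_sq.deriv]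
  exact real_inner_neg_sub_le_of_coercive hν (hM t (e t)) (hdbnd t)

theorem dob_lyapunov_inequality (p : ℕ) (e d : ℝ → EuclideanSpace ℝ (Fin p))
    (M : ℝ → EuclideanSpace ℝ (Fin p) →ₗ[ℝ] EuclideanSpace ℝ (Fin p))
    (d' : ℝ → EuclideanSpace ℝ (Fin p)) (α ω ν : ℝ)
    (hν : 0 < ν) (hω : 0 ≤ ω)
    (hM : ∀ t, ∀ v : EuclideanSpace ℝ (Fin p), α * ‖v‖ ^ 2 ≤ ⟪v, M t v⟫)
    (hd : ∀ t, HasDerivAt d (d' t) t)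
    (hdbnd : ∀ t, ‖d' t‖ ≤ ω)
    (he : ∀ t, HasDerivAt e (-(M t (e t)) - d' t) t) :
    ∀ t, deriv (fun s => ‖e s‖ ^ 2 / 2) t ≤
      -(2 * α - ν) * (‖e t‖ ^ 2 / 2) + ω ^ 2 / (2 * ν) :=
  dob_lyapunov_inequality_general p e M d' α ω ν hν hM hdbnd he
end

section
/- Let h : ℝ → ℝ and e : ℝ → ℝ^p be differentiable, β > 0, and define h̄(t) = β h(t) - ½‖e(t)‖². Suppose h̄(0) > 0 and h̄'(t) ≥ -γ h̄(t) for all t ≥ 0 with γ > 0. Then h(t) ≥ ‖e(t)‖²/(2β) ≥ 0 for all t ≥ 0. -/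
/-!
By Grönwall's inequality, `h̄ t ≥ h̄ 0 * exp (-γ t) > 0` for `t ≥ 0`, and `h̄ t > 0` rearranges
to `h t > ‖e t‖² / (2β)`.
-/

open Set Real

theorem mul_exp_le_of_neg_mul_le_deriv_right {f f' : ℝ → ℝ} {γ a b : ℝ}
    (hf : ContinuousOn f (Icc a b)) (hf' : ∀ x ∈ Ico a b, HasDerivWithinAt f (f' x) (Ici x) x)
    (bound : ∀ x ∈ Ico a b, -γ * f x ≤ f' x) :
    ∀ x ∈ Icc a b, f a * exp (-γ * (x - a)) ≤ f x := by
  intro x hx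
  have key := le_gronwallBound_of_liminf_deriv_right_le (f := fun y => -f y) (f' := fun y => -f' y)
    (δ := -f a) (K := -γ) (ε := 0) hf.neg
    (fun y hy _ hr => (hf' y hy).neg.liminf_right_slope_le hr) le_rfl
    (fun y hy => by linarith [bound y hy]) x hx
  rw [gronwallBound_ε0] at key
  linarith

theorem composite_barrier_safety_general (p : ℕ) (h : ℝ → ℝ) (e : ℝ → EuclideanSpace ℝ (Fin p))
    (β γ : ℝ) (hβ : 0 < β)
    (hh : Differentiable ℝ h) (he : Differentiable ℝ e)
    (hbar : ℝ → ℝ) (hbar_def : ∀ t, hbar t = β * h t - ‖e t‖ ^ 2 / 2)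
    (h0 : 0 < hbar 0)
    (hineq : ∀ t ≥ 0, deriv hbar t ≥ -γ * hbar t) :
    ∀ t ≥ 0, h t ≥ ‖e t‖ ^ 2 / (2 * β) ∧ (0:ℝ) ≤ ‖e t‖ ^ 2 / (2 * β) := by
  have hbar_diff : Differentiable ℝ hbar := by
    rw [funext hbar_def]
    exact (hh.const_mul β).sub (he.norm_sq ℝ |>.div_const 2)
  intro t ht
  have hbar_pos : 0 < hbar t := by
    have growth := mul_exp_le_of_neg_mul_le_deriv_right hbar_diff.continuous.continuousOn
      (fun x _ => (hbar_diff x).hasDerivAt.hasDerivWithinAt)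
      (fun x hx => hineq x hx.1) t ⟨ht, le_rfl⟩
    exact (mul_pos h0 (exp_pos _)).trans_le growth
  rw [hbar_def] at hbar_pos
  refine ⟨?_, by positivity⟩
  rw [ge_iff_le, div_le_iff₀ (by positivity)]
  linarith

theorem composite_barrier_safety (p : ℕ) (h : ℝ → ℝ) (e : ℝ → EuclideanSpace ℝ (Fin p))
    (β γ : ℝ) (hβ : 0 < β) (hγ : 0 < γ)
    (hh : Differentiable ℝ h) (he : Differentiable ℝ e)
    (hbar : ℝ → ℝ) (hbar_def : ∀ t, hbar t = β * h t - ‖e t‖ ^ 2 / 2)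
    (h0 : 0 < hbar 0)
    (hineq : ∀ t ≥ 0, deriv hbar t ≥ -γ * hbar t) :
    ∀ t ≥ 0, h t ≥ ‖e t‖ ^ 2 / (2 * β) ∧ (0:ℝ) ≤ ‖e t‖ ^ 2 / (2 * β) :=
  composite_barrier_safety_general p h e β γ hβ hh he hbar hbar_def h0 hineq
end

section
/- Under the hypotheses of the previous lemma with h̄(t) = β h(t) - ½‖e(t)‖², h̄(0) ≥ 0, and h̄'(t) ≥ -γ h̄(t) - ω²/(2ν), one has h(t) ≥ -(ω²)/(2νγβ)(1 - e^{-γt}) ≥ -(ω²)/(2νγβ) for all t ≥ 0. -/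
/-!
Grönwall's comparison principle, applied to `-hbar`, turns the differential inequality into
`hbar t ≥ hbar 0 * exp (-γ t) - ω² / (2νγ) * (1 - exp (-γ t))`; dropping the nonnegative first
term and using `β h ≥ hbar` gives the bound.
-/

open Real

theorem neg_gronwallBound_le_of_deriv_ge {f : ℝ → ℝ} {K ε : ℝ} (hf : Differentiable ℝ f)
    (bound : ∀ t ≥ 0, deriv f t ≥ K * f t - ε) {t : ℝ} (ht : 0 ≤ t) :
    -gronwallBound (-f 0) K ε t ≤ f t := by
  have key := le_gronwallBound_of_liminf_deriv_right_le (f := -f) (f' := -deriv f)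
    (δ := -f 0) (K := K) (ε := ε) (a := 0) (b := t) hf.neg.continuous.continuousOn
    (fun x _ r hr => (hf x).hasDerivAt.neg.hasDerivWithinAt.liminf_right_slope_le hr) le_rfl
    (fun x hx => by simp only [Pi.neg_apply]; linarith [bound x hx.1]) t ⟨ht, le_rfl⟩
  simp only [Pi.neg_apply, sub_zero] at key
  linarith

theorem gronwallBound_neg_le {δ γ ε t : ℝ} (hδ : 0 ≤ δ) (hγ : 0 < γ) :
    gronwallBound (-δ) (-γ) ε t ≤ ε / γ * (1 - exp (-γ * t)) := by
  rw [gronwallBound_of_K_ne_0 (neg_ne_zero.2 hγ.ne'), div_neg]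
  nlinarith [exp_pos (-γ * t)]

theorem safety_violation_bound_general (p : ℕ) (h : ℝ → ℝ) (e : ℝ → EuclideanSpace ℝ (Fin p))
    (β γ ν ω : ℝ) (hβ : 0 < β) (hγ : 0 < γ) (hν : 0 < ν)
    (hbar : ℝ → ℝ) (hbar_def : ∀ t, hbar t = β * h t - ‖e t‖ ^ 2 / 2)
    (hdiff : Differentiable ℝ hbar)
    (h0 : 0 ≤ hbar 0)
    (hineq : ∀ t ≥ 0, deriv hbar t ≥ -γ * hbar t - ω ^ 2 / (2 * ν)) :
    ∀ t ≥ 0, h t ≥ -(ω ^ 2) / (2 * ν * γ * β) * (1 - Real.exp (-γ * t)) ∧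
      -(ω ^ 2) / (2 * ν * γ * β) * (1 - Real.exp (-γ * t)) ≥ -(ω ^ 2) / (2 * ν * γ * β) := by
  intro t ht
  have hbar_le : hbar t ≤ β * h t := by
    rw [hbar_def]; linarith [sq_nonneg ‖e t‖]
  have hbar_ge : -(ω ^ 2 / (2 * ν) / γ * (1 - exp (-γ * t))) ≤ hbar t :=
    (neg_le_neg (gronwallBound_neg_le h0 hγ)).trans
      (neg_gronwallBound_le_of_deriv_ge hdiff hineq ht)
  constructor
  · rw [ge_iff_le, ← mul_le_mul_iff_of_pos_left hβ]
    calc β * (-(ω ^ 2) / (2 * ν * γ * β) * (1 - exp (-γ * t)))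
        = -(ω ^ 2 / (2 * ν) / γ * (1 - exp (-γ * t))) := by field_simp
      _ ≤ β * h t := hbar_ge.trans hbar_le
  · have hc : -(ω ^ 2) / (2 * ν * γ * β) ≤ 0 :=
      div_nonpos_of_nonpos_of_nonneg (neg_nonpos.2 (sq_nonneg ω)) (by positivity)
    nlinarith [exp_pos (-γ * t)]

theorem safety_violation_bound (p : ℕ) (h : ℝ → ℝ) (e : ℝ → EuclideanSpace ℝ (Fin p))
    (β γ ν ω : ℝ) (hβ : 0 < β) (hγ : 0 < γ) (hν : 0 < ν) (hω : 0 ≤ ω)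
    (hbar : ℝ → ℝ) (hbar_def : ∀ t, hbar t = β * h t - ‖e t‖ ^ 2 / 2)
    (hdiff : Differentiable ℝ hbar)
    (h0 : 0 ≤ hbar 0)
    (hineq : ∀ t ≥ 0, deriv hbar t ≥ -γ * hbar t - ω ^ 2 / (2 * ν)) :
    ∀ t ≥ 0, h t ≥ -(ω ^ 2) / (2 * ν * γ * β) * (1 - Real.exp (-γ * t)) ∧
      -(ω ^ 2) / (2 * ν * γ * β) * (1 - Real.exp (-γ * t)) ≥ -(ω ^ 2) / (2 * ν * γ * β) :=
  safety_violation_bound_general p h e β γ ν ω hβ hγ hν hbar hbar_def hdiff h0 hineq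
end

section
/- Let s₀, s₁, …, s_{r-1} : ℝ → ℝ be differentiable functions satisfying s_k(t) = s_{k-1}'(t) + λ_k s_{k-1}(t) for k = 1,…,r-1 with λ_k > 0, and suppose s_k(0) > 0 for all k = 0,…,r-1, and s_{r-1}(t) > 0 for all t ≥ 0. Then s_k(t) > 0 for all t ≥ 0 and all k = 0,…,r-1; in particular s₀(t) = h(t) > 0. -/
/-! Multiplying by the integrating factor `Real.exp (c t)` turns `f' + c f > 0` into strict growth of
`f t * Real.exp (c t)`, so `f > 0` on `[a, ∞)` whenever `f a > 0`. Applied to `s_{k-1}` with `c = λ_k`,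
positivity of `s_k` passes to `s_{k-1}`, and a downward induction from `s_{r-1}` reaches `s₀`. -/

open Real Set

theorem HasDerivAt.mul_exp_const_mul {f : ℝ → ℝ} {f' t : ℝ} (c : ℝ) (hf : HasDerivAt f f' t) :
    HasDerivAt (fun x => f x * Real.exp (c * x)) ((f' + c * f t) * Real.exp (c * t)) t := by
  have hexp : HasDerivAt (fun x => Real.exp (c * x)) (Real.exp (c * t) * c) t :=
    ((hasDerivAt_id t).const_mul c).exp.congr_deriv (by simp)
  exact (hf.mul hexp).congr_deriv (by ring)

theorem strictMonoOn_mul_exp_of_deriv_add_mul_pos {f : ℝ → ℝ} {a c : ℝ} (hf : Differentiable ℝ f)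
    (h : ∀ t ≥ a, 0 < deriv f t + c * f t) :
    StrictMonoOn (fun x => f x * exp (c * x)) (Ici a) := by
  have hderiv t := (hf t).hasDerivAt.mul_exp_const_mul c
  refine strictMonoOn_of_deriv_pos (convex_Ici a)
    (fun t _ => (hderiv t).continuousAt.continuousWithinAt) fun t ht => ?_
  rw [interior_Ici] at ht
  rw [(hderiv t).deriv]
  exact mul_pos (h t (le_of_lt ht)) (exp_pos _)

theorem pos_of_deriv_add_mul_pos {f : ℝ → ℝ} {a c : ℝ} (hf : Differentiable ℝ f) (ha : 0 < f a)
    (h : ∀ t ≥ a, 0 < deriv f t + c * f t) : ∀ t ≥ a, 0 < f t := by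
  intro t ht
  have hmono := strictMonoOn_mul_exp_of_deriv_add_mul_pos hf h
  have hweighted : 0 < f t * exp (c * t) :=
    calc 0 < f a * exp (c * a) := mul_pos ha (exp_pos _)
      _ ≤ f t * exp (c * t) := hmono.monotoneOn self_mem_Ici ht ht
  exact pos_of_mul_pos_left hweighted (exp_pos _).le

theorem cascade_positivity_general (r : ℕ) (s : ℕ → ℝ → ℝ) (lam : ℕ → ℝ)
    (hdiff : ∀ k ≤ r - 1, Differentiable ℝ (s k))
    (hrel : ∀ k, 1 ≤ k → k ≤ r - 1 → ∀ t, s k t = deriv (s (k - 1)) t + lam k * s (k - 1) t)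
    (hinit : ∀ k ≤ r - 1, 0 < s k 0)
    (htop : ∀ t ≥ (0:ℝ), 0 < s (r - 1) t) :
    ∀ k ≤ r - 1, ∀ t ≥ (0:ℝ), 0 < s k t := by
  intro k hk
  induction hk using Nat.decreasingInduction with
  | self => exact htop
  | of_succ k hk ih =>
    refine pos_of_deriv_add_mul_pos (c := lam (k + 1)) (hdiff k hk.le) (hinit k hk.le) fun t ht => ?_
    have hrel_k := hrel (k + 1) (Nat.le_add_left 1 k) hk t
    rw [Nat.add_sub_cancel] at hrel_k
    exact hrel_k ▸ ih t ht

theorem cascade_positivity (r : ℕ) (hr : 1 ≤ r) (s : ℕ → ℝ → ℝ) (lam : ℕ → ℝ)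
    (hdiff : ∀ k ≤ r - 1, Differentiable ℝ (s k))
    (hlam : ∀ k, 1 ≤ k → k ≤ r - 1 → 0 < lam k)
    (hrel : ∀ k, 1 ≤ k → k ≤ r - 1 → ∀ t, s k t = deriv (s (k - 1)) t + lam k * s (k - 1) t)
    (hinit : ∀ k ≤ r - 1, 0 < s k 0)
    (htop : ∀ t ≥ (0:ℝ), 0 < s (r - 1) t) :
    ∀ k ≤ r - 1, ∀ t ≥ (0:ℝ), 0 < s k t :=
  cascade_positivity_general r s lam hdiff hrel hinit htop
end

section
/- Let M be a symmetric positive definite real n×n matrix with μ₁ I ≼ M⁻¹ ≼ μ₂ I (μ₁ > 0), and let e : ℝ → ℝ^n satisfy e'(t) = -α₁ M⁻¹ e(t) - d'(t) with ‖d'(t)‖ ≤ ω_d and α₁ > 0. Then V₁(t) = ½‖e(t)‖² satisfies V₁'(t) ≤ -(2α - ν) V₁(t) + ω_d²/(2ν) for any ν > 0, where α = α₁ μ₁. -/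
/-!
Along a trajectory, `d/dt ½‖e‖² = ⟪e, e'⟫ = -α₁ ⟪e, M⁻¹ e⟫ - ⟪e, d'⟫`. The lower spectral bound turns
the first term into `-α₁ μ₁ ‖e‖²`, Cauchy–Schwarz bounds the second by `ω_d ‖e‖`, and Young's
inequality `2 ω_d ‖e‖ ≤ ν ‖e‖² + ω_d² / ν` trades that cross term for the loss `ν` in the decay rate.
-/

open Matrix

theorem HasDerivAt.dotProduct {𝕜 ι : Type*} [NontriviallyNormedField 𝕜] [Fintype ι]
    {f g : 𝕜 → ι → 𝕜} {f' g' : ι → 𝕜} {x : 𝕜}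
    (hf : HasDerivAt f f' x) (hg : HasDerivAt g g' x) :
    HasDerivAt (fun s => f s ⬝ᵥ g s) (f' ⬝ᵥ g x + f x ⬝ᵥ g') x := by
  simp only [_root_.dotProduct, ← Finset.sum_add_distrib]
  exact HasDerivAt.fun_sum fun i _ =>
    (hasDerivAt_pi.mp hf i).mul (hasDerivAt_pi.mp hg i)

theorem HasDerivAt.half_dotProduct_self {ι : Type*} [Fintype ι] {f : ℝ → ι → ℝ} {f' : ι → ℝ}
    {x : ℝ} (hf : HasDerivAt f f' x) :
    HasDerivAt (fun s => (f s ⬝ᵥ f s) / 2) (f x ⬝ᵥ f') x := by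
  refine ((hf.dotProduct hf).div_const 2).congr_deriv ?_
  rw [dotProduct_comm f']
  ring

theorem dotProduct_self_eq_norm_toLp_sq {ι : Type*} [Fintype ι] (u : ι → ℝ) :
    u ⬝ᵥ u = ‖WithLp.toLp 2 u‖ ^ 2 := by
  rw [← real_inner_self_eq_norm_sq, EuclideanSpace.inner_toLp_toLp, star_trivial]

theorem abs_dotProduct_le_norm_toLp_mul_norm_toLp {ι : Type*} [Fintype ι] (u w : ι → ℝ) :
    |u ⬝ᵥ w| ≤ ‖WithLp.toLp 2 u‖ * ‖WithLp.toLp 2 w‖ := by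
  simpa [EuclideanSpace.inner_toLp_toLp, dotProduct_comm w] using
    abs_real_inner_le_norm (WithLp.toLp 2 u) (WithLp.toLp 2 w)

theorem el_dob_lyapunov_general (n : ℕ) (M : Matrix (Fin n) (Fin n) ℝ)
    (μ₁ : ℝ)
    (hlow : ∀ v : Fin n → ℝ, μ₁ * (v ⬝ᵥ v) ≤ v ⬝ᵥ M⁻¹.mulVec v)
    (e d' : ℝ → Fin n → ℝ) (α₁ ω_d ν : ℝ) (hα₁ : 0 < α₁) (hν : 0 < ν)
    (hdbnd : ∀ t, ‖(WithLp.equiv 2 (Fin n → ℝ)).symm (d' t)‖ ≤ ω_d)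
    (he : ∀ t, HasDerivAt e (-α₁ • M⁻¹.mulVec (e t) - d' t) t) :
    ∀ t, deriv (fun s => (e s ⬝ᵥ e s) / 2) t ≤
      -(2 * (α₁ * μ₁) - ν) * ((e t ⬝ᵥ e t) / 2) + ω_d ^ 2 / (2 * ν) := by
  intro t
  have hV : deriv (fun s => (e s ⬝ᵥ e s) / 2) t
      = -α₁ * (e t ⬝ᵥ M⁻¹ *ᵥ e t) - e t ⬝ᵥ d' t := by
    rw [(he t).half_dotProduct_self.deriv, dotProduct_sub, dotProduct_smul, smul_eq_mul]
  set r := ‖WithLp.toLp 2 (e t)‖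
  have hnorm : e t ⬝ᵥ e t = r ^ 2 := dotProduct_self_eq_norm_toLp_sq (e t)
  have hdecay : α₁ * (μ₁ * r ^ 2) ≤ α₁ * (e t ⬝ᵥ M⁻¹ *ᵥ e t) :=
    mul_le_mul_of_nonneg_left (hnorm ▸ hlow (e t)) hα₁.le
  have hcross : e t ⬝ᵥ d' t ≥ -(r * ω_d) :=
    neg_le_of_abs_le <| (abs_dotProduct_le_norm_toLp_mul_norm_toLp _ _).trans <|
      mul_le_mul_of_nonneg_left (hdbnd t) (norm_nonneg _)
  have hyoung : 2 * r * ω_d ≤ ν * r ^ 2 + ν⁻¹ * ω_d ^ 2 := two_mul_le_add_mul_sq hν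
  rw [hV, hnorm, show ω_d ^ 2 / (2 * ν) = (ν⁻¹ * ω_d ^ 2) / 2 by ring]
  linarith

theorem el_dob_lyapunov (n : ℕ) (M : Matrix (Fin n) (Fin n) ℝ)
    (hMsymm : Mᵀ = M) (hMpd : M.PosDef)
    (μ₁ μ₂ : ℝ) (hμ₁ : 0 < μ₁)
    (hlow : ∀ v : Fin n → ℝ, μ₁ * (v ⬝ᵥ v) ≤ v ⬝ᵥ M⁻¹.mulVec v)
    (hhigh : ∀ v : Fin n → ℝ, v ⬝ᵥ M⁻¹.mulVec v ≤ μ₂ * (v ⬝ᵥ v))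
    (e d' : ℝ → Fin n → ℝ) (α₁ ω_d ν : ℝ) (hα₁ : 0 < α₁) (hν : 0 < ν) (hω : 0 ≤ ω_d)
    (hdbnd : ∀ t, ‖(WithLp.equiv 2 (Fin n → ℝ)).symm (d' t)‖ ≤ ω_d)
    (he : ∀ t, HasDerivAt e (-α₁ • M⁻¹.mulVec (e t) - d' t) t) :
    ∀ t, deriv (fun s => (e s ⬝ᵥ e s) / 2) t ≤
      -(2 * (α₁ * μ₁) - ν) * ((e t ⬝ᵥ e t) / 2) + ω_d ^ 2 / (2 * ν) :=
  el_dob_lyapunov_general n M μ₁ hlow e d' α₁ ω_d ν hα₁ hν hdbnd he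
end
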